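/- Let p > 0 and 0 < q < 1 be real numbers. Then the function u ↦ ( (1+u)^{−p} − 1 ) u^{−q−1} is Lebesgue integrable on (0,∞) and ∫₀^∞ ( (1+u)^{−p} − 1 ) u^{−q−1} du = Γ(−q) Γ(p+q) / Γ(p). -/

import Mathlib

/-!
Integrate by parts against `u ^ (-q) / (-q)`. Since `|(1 + u) ^ (-p) - 1| ≤ min (p u) 1`,
both boundary terms vanish, and the integral becomes
`-(p / q) ∫₀^∞ u ^ (-q) (1 + u) ^ (-p - 1) du`.
The substitution `x = u / (1 + u)` turns this into the Euler Beta integral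
`B(1 - q, p + q) = Γ(1 - q) Γ(p + q) / Γ(p + 1)`. The recurrences `Γ(1 - q) = -q Γ(-q)` and
`Γ(p + 1) = p Γ(p)` finish the proof.
-/

open MeasureTheory Set Real Filter Topology

lemma one_sub_mul_sub_one_le_rpow_neg {p x : ℝ} (hp : 0 ≤ p) (hx : 0 < x) :
    1 - p * (x - 1) ≤ x ^ (-p) := by
  calc 1 - p * (x - 1) ≤ 1 - p * log x := by
        gcongr
        exact log_le_sub_one_of_pos hx
    _ ≤ exp (-(p * log x)) := one_sub_le_exp_neg _
    _ = x ^ (-p) := by rw [rpow_def_of_pos hx]; ring_nf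

lemma abs_one_add_rpow_neg_sub_one_le_mul {p u : ℝ} (hp : 0 ≤ p) (hu : 0 ≤ u) :
    |(1 + u) ^ (-p) - 1| ≤ p * u := by
  have hle : (1 + u) ^ (-p) ≤ 1 :=
    rpow_le_one_of_one_le_of_nonpos (by linarith) (by linarith)
  have hge := one_sub_mul_sub_one_le_rpow_neg hp (by linarith : 0 < 1 + u)
  rw [abs_sub_comm, abs_of_nonneg (by linarith)]
  linarith

lemma abs_one_add_rpow_neg_sub_one_le_one {p u : ℝ} (hp : 0 ≤ p) (hu : 0 ≤ u) :
    |(1 + u) ^ (-p) - 1| ≤ 1 := by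
  have hle : (1 + u) ^ (-p) ≤ 1 :=
    rpow_le_one_of_one_le_of_nonpos (by linarith) (by linarith)
  have hpos : 0 < (1 + u) ^ (-p) := rpow_pos_of_pos (by linarith) _
  rw [abs_le]
  constructor <;> linarith

lemma continuousOn_one_add_rpow_neg_sub_one_mul_rpow (p q : ℝ) :
    ContinuousOn (fun u : ℝ => ((1 + u) ^ (-p) - 1) * u ^ (-q - 1)) (Ioi 0) := by
  intro u (hu : 0 < u)
  apply ContinuousAt.continuousWithinAt
  have h1 : 1 + u ≠ 0 ∨ 0 ≤ -p := Or.inl (by positivity)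
  have h2 : u ≠ 0 ∨ 0 ≤ -q - 1 := Or.inl hu.ne'
  fun_prop (disch := assumption)

lemma integrableOn_one_add_rpow_neg_sub_one_mul_rpow {p q : ℝ} (hp : 0 ≤ p) (hq0 : 0 < q)
    (hq1 : q < 1) :
    IntegrableOn (fun u : ℝ => ((1 + u) ^ (-p) - 1) * u ^ (-q - 1)) (Ioi 0) := by
  have hcont := continuousOn_one_add_rpow_neg_sub_one_mul_rpow p q
  rw [← Ioc_union_Ioi_eq_Ioi zero_le_one]
  refine IntegrableOn.union ?_ ?_
  · refine Integrable.mono' ((intervalIntegral.intervalIntegrable_rpow' (r := -q)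
      (by linarith)).1.const_mul p) ((hcont.mono Ioc_subset_Ioi_self).aestronglyMeasurable
      measurableSet_Ioc) ((ae_restrict_iff' measurableSet_Ioc).2 (ae_of_all _ ?_))
    rintro u ⟨hu0, -⟩
    rw [norm_mul, norm_eq_abs, norm_of_nonneg (rpow_nonneg hu0.le _)]
    calc |(1 + u) ^ (-p) - 1| * u ^ (-q - 1) ≤ p * u * u ^ (-q - 1) := by
          gcongr
          exact abs_one_add_rpow_neg_sub_one_le_mul hp hu0.le
      _ = p * u ^ (-q) := by
          rw [mul_assoc, ← rpow_one_add' hu0.le (by linarith : (1 : ℝ) + (-q - 1) < 0).ne]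
          ring_nf
  · refine Integrable.mono' (integrableOn_Ioi_rpow_of_lt (by linarith : -q - 1 < -1) one_pos)
      ((hcont.mono (Ioi_subset_Ioi zero_le_one)).aestronglyMeasurable measurableSet_Ioi)
      ((ae_restrict_iff' measurableSet_Ioi).2 (ae_of_all _ ?_))
    intro u (hu : 1 < u)
    rw [norm_mul, norm_eq_abs, norm_of_nonneg (rpow_nonneg (by linarith) _)]
    exact mul_le_of_le_one_left (rpow_nonneg (by linarith) _)
      (abs_one_add_rpow_neg_sub_one_le_one hp (by linarith))

lemma ofReal_rpow_mul_one_sub_rpow {a b x : ℝ} (hx : x ∈ Ioo (0 : ℝ) 1) :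
    ((x ^ (a - 1) * (1 - x) ^ (b - 1) : ℝ) : ℂ) =
      (x : ℂ) ^ ((a : ℂ) - 1) * (1 - (x : ℂ)) ^ ((b : ℂ) - 1) := by
  rw [Complex.ofReal_mul, Complex.ofReal_cpow hx.1.le, Complex.ofReal_cpow (by linarith [hx.2])]
  push_cast
  rfl

lemma integrableOn_Ioo_rpow_mul_one_sub_rpow {a b : ℝ} (ha : 0 < a) (hb : 0 < b) :
    IntegrableOn (fun x : ℝ => x ^ (a - 1) * (1 - x) ^ (b - 1)) (Ioo 0 1) := by
  have hC := (Complex.betaIntegral_convergent (u := a) (v := b) (by simpa) (by simpa)).1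
  refine IntegrableOn.congr_fun (hC.mono_set Ioo_subset_Ioc_self).re (fun x hx => ?_)
    measurableSet_Ioo
  rw [← ofReal_rpow_mul_one_sub_rpow hx]
  exact Complex.ofReal_re _

lemma integral_Ioo_rpow_mul_one_sub_rpow {a b : ℝ} (ha : 0 < a) (hb : 0 < b) :
    ∫ x in Ioo (0 : ℝ) 1, x ^ (a - 1) * (1 - x) ^ (b - 1) =
      Gamma a * Gamma b / Gamma (a + b) := by
  have h := Complex.betaIntegral_eq_Gamma_mul_div a b (by simpa) (by simpa)
  rw [Complex.betaIntegral, intervalIntegral.integral_of_le zero_le_one,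
    integral_Ioc_eq_integral_Ioo, ← setIntegral_congr_fun measurableSet_Ioo
      (fun x hx => ofReal_rpow_mul_one_sub_rpow (a := a) (b := b) hx), integral_complex_ofReal,
    ← Complex.ofReal_add, Complex.Gamma_ofReal, Complex.Gamma_ofReal, Complex.Gamma_ofReal] at h
  exact_mod_cast h

lemma hasDerivAt_div_one_add {t : ℝ} (ht : 0 < t) :
    HasDerivAt (fun t : ℝ => t / (1 + t)) ((1 + t) ^ 2)⁻¹ t := by
  refine ((hasDerivAt_id' t).div ((hasDerivAt_id' t).const_add 1)
    (by positivity)).congr_deriv ?_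
  field_simp
  ring

lemma injOn_div_one_add : InjOn (fun t : ℝ => t / (1 + t)) (Ioi 0) := by
  intro x (hx : 0 < x) y (hy : 0 < y) h
  field_simp at h
  linarith

lemma image_div_one_add_Ioi : (fun t : ℝ => t / (1 + t)) '' Ioi 0 = Ioo 0 1 := by
  ext x
  constructor
  · rintro ⟨t, ht : 0 < t, rfl⟩
    exact ⟨by positivity, (div_lt_one (by positivity)).2 (by linarith)⟩
  · rintro ⟨hx0, hx1⟩
    refine ⟨x / (1 - x), div_pos hx0 (by linarith), ?_⟩
    have : 1 - x ≠ 0 := by linarith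
    field_simp
    ring

lemma abs_deriv_smul_beta_integrand_comp_div_one_add {a b t : ℝ} (ht : 0 < t) :
    |((1 + t) ^ 2)⁻¹| • ((t / (1 + t)) ^ (a - 1) * (1 - t / (1 + t)) ^ (b - 1)) =
      t ^ (a - 1) * (1 + t) ^ (-(a + b)) := by
  have h1t : 0 < 1 + t := by linarith
  have hsub : 1 - t / (1 + t) = (1 + t)⁻¹ := by field_simp; ring
  have hexp : (1 + t) ^ (-(a + b)) =
      ((1 + t) ^ 2)⁻¹ * ((1 + t) ^ (a - 1))⁻¹ * ((1 + t) ^ (b - 1))⁻¹ := by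
    rw [← rpow_natCast, ← mul_inv, ← mul_inv, ← rpow_add h1t, ← rpow_add h1t,
      ← rpow_neg h1t.le]
    congr 1
    push_cast
    ring
  rw [smul_eq_mul, abs_of_pos (by positivity), hsub, div_rpow ht.le h1t.le, inv_rpow h1t.le, hexp]
  ring

lemma integrableOn_Ioi_rpow_mul_one_add_rpow {a b : ℝ} (ha : 0 < a) (hb : 0 < b) :
    IntegrableOn (fun t : ℝ => t ^ (a - 1) * (1 + t) ^ (-(a + b))) (Ioi 0) := by
  have h := integrableOn_Ioo_rpow_mul_one_sub_rpow ha hb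
  rw [← image_div_one_add_Ioi, integrableOn_image_iff_integrableOn_abs_deriv_smul
    measurableSet_Ioi (fun t ht => (hasDerivAt_div_one_add ht).hasDerivWithinAt)
    injOn_div_one_add] at h
  exact h.congr_fun (fun t ht => abs_deriv_smul_beta_integrand_comp_div_one_add ht)
    measurableSet_Ioi

lemma integral_Ioi_rpow_mul_one_add_rpow {a b : ℝ} (ha : 0 < a) (hb : 0 < b) :
    ∫ t in Ioi (0 : ℝ), t ^ (a - 1) * (1 + t) ^ (-(a + b)) =
      Gamma a * Gamma b / Gamma (a + b) := by
  rw [← integral_Ioo_rpow_mul_one_sub_rpow ha hb, ← image_div_one_add_Ioi,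
    integral_image_eq_integral_abs_deriv_smul measurableSet_Ioi
      (fun t ht => (hasDerivAt_div_one_add ht).hasDerivWithinAt) injOn_div_one_add]
  exact setIntegral_congr_fun measurableSet_Ioi
    (fun t ht => (abs_deriv_smul_beta_integrand_comp_div_one_add ht).symm)

lemma tendsto_one_add_rpow_neg_sub_one_mul_rpow_nhdsGT_zero {p q : ℝ} (hp : 0 ≤ p)
    (hq1 : q < 1) :
    Tendsto (fun u : ℝ => ((1 + u) ^ (-p) - 1) * u ^ (-q)) (𝓝[>] 0) (𝓝 0) := by
  have hbound : Tendsto (fun u : ℝ => p * u ^ (1 - q)) (𝓝[>] 0) (𝓝 0) := by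
    have h := (continuousAt_rpow_const 0 (1 - q) (Or.inr (by linarith))).tendsto.const_mul p
    rw [zero_rpow (by linarith), mul_zero] at h
    exact h.mono_left nhdsWithin_le_nhds
  refine squeeze_zero_norm' ?_ hbound
  filter_upwards [self_mem_nhdsWithin] with u (hu : 0 < u)
  rw [norm_mul, norm_eq_abs, norm_of_nonneg (rpow_nonneg hu.le _)]
  calc |(1 + u) ^ (-p) - 1| * u ^ (-q) ≤ p * u * u ^ (-q) := by
        gcongr
        exact abs_one_add_rpow_neg_sub_one_le_mul hp hu.le
    _ = p * u ^ (1 - q) := by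
        rw [mul_assoc, ← rpow_one_add' hu.le (by linarith : (0 : ℝ) < 1 + -q).ne']
        ring_nf

lemma tendsto_one_add_rpow_neg_sub_one_mul_rpow_atTop {p q : ℝ} (hp : 0 < p) (hq0 : 0 < q) :
    Tendsto (fun u : ℝ => ((1 + u) ^ (-p) - 1) * u ^ (-q)) atTop (𝓝 0) := by
  have h1 : Tendsto (fun u : ℝ => (1 + u) ^ (-p)) atTop (𝓝 0) :=
    (tendsto_rpow_neg_atTop hp).comp (tendsto_atTop_add_const_left atTop 1 tendsto_id)
  simpa using (h1.sub_const 1).mul (tendsto_rpow_neg_atTop hq0)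

lemma integral_one_add_rpow_neg_sub_one_mul_rpow {p q : ℝ} (hp : 0 < p) (hq0 : 0 < q)
    (hq1 : q < 1) :
    ∫ u in Ioi (0 : ℝ), ((1 + u) ^ (-p) - 1) * u ^ (-q - 1) =
      -(p / q) * ∫ u in Ioi (0 : ℝ), u ^ (-q) * (1 + u) ^ (-p - 1) := by
  have hbeta := integrableOn_Ioi_rpow_mul_one_add_rpow (a := 1 - q) (b := p + q)
    (by linarith) (by linarith)
  rw [show 1 - q - 1 = -q by ring, show -(1 - q + (p + q)) = -p - 1 by ring] at hbeta
  have hu : ∀ x ∈ Ioi (0 : ℝ), HasDerivAt (fun x => (1 + x) ^ (-p) - 1)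
      (-p * (1 + x) ^ (-p - 1)) x := fun x (hx : 0 < x) =>
    ((((hasDerivAt_id' x).const_add 1).rpow_const (Or.inl (by positivity))).sub_const
      1).congr_deriv (by ring)
  have hv : ∀ x ∈ Ioi (0 : ℝ), HasDerivAt (fun x => x ^ (-q) / (-q)) (x ^ (-q - 1)) x :=
    fun x (hx : 0 < x) => ((hasDerivAt_rpow_const (Or.inl hx.ne')).div_const (-q)).congr_deriv
      (by field_simp)
  have hu'v : ∀ x, -p * (1 + x) ^ (-p - 1) * (x ^ (-q) / -q) =
      p / q * (x ^ (-q) * (1 + x) ^ (-p - 1)) := fun x => by field_simp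
  rw [integral_Ioi_mul_deriv_eq_deriv_mul hu hv
    (integrableOn_one_add_rpow_neg_sub_one_mul_rpow hp.le hq0 hq1) (a' := 0) (b' := 0)]
  · simp only [hu'v, integral_const_mul]
    ring
  · simp only [Pi.mul_def, hu'v]
    exact hbeta.const_mul (p / q)
  · simpa [Pi.mul_def, mul_div_assoc] using
      (tendsto_one_add_rpow_neg_sub_one_mul_rpow_nhdsGT_zero hp.le hq1).div_const (-q)
  · simpa [Pi.mul_def, mul_div_assoc] using
      (tendsto_one_add_rpow_neg_sub_one_mul_rpow_atTop hp hq0).div_const (-q)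

theorem beta_type_integral (p q : ℝ) (hp : 0 < p) (hq0 : 0 < q) (hq1 : q < 1) :
    MeasureTheory.IntegrableOn
      (fun u : ℝ => ((1 + u) ^ (-p) - 1) * u ^ (-q - 1)) (Set.Ioi 0) ∧
    ∫ u in Set.Ioi (0:ℝ), ((1 + u) ^ (-p) - 1) * u ^ (-q - 1)
      = Real.Gamma (-q) * Real.Gamma (p + q) / Real.Gamma p := by
  refine ⟨integrableOn_one_add_rpow_neg_sub_one_mul_rpow hp.le hq0 hq1, ?_⟩
  have hbeta := integral_Ioi_rpow_mul_one_add_rpow (a := 1 - q) (b := p + q)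
    (by linarith) (by linarith)
  rw [show 1 - q - 1 = -q by ring, show -(1 - q + (p + q)) = -p - 1 by ring,
    show 1 - q + (p + q) = p + 1 by ring, Gamma_add_one hp.ne',
    show 1 - q = -q + 1 by ring, Gamma_add_one (neg_ne_zero.2 hq0.ne')] at hbeta
  have hΓp : Gamma p ≠ 0 := (Gamma_pos_of_pos hp).ne'
  rw [integral_one_add_rpow_neg_sub_one_mul_rpow hp hq0 hq1, hbeta]
  field_simp
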